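/- arXiv:1108.1880 — 2 statements merged into one kernel-verified Lean document; each statement's English description precedes it below -/
import Mathlib

section
/- Let α: U → V be a transmission between supertropical monoids that is injective on (eU) \ {0}. If α has trivial ghost kernel (i.e., α(x) ∈ eV implies x ∈ eU) and V is a semiring, then U is a semiring. -/
/-! In any supertropical monoid the forced addition is associative, and `(x + y) z = xz + yz`
can only fail when `ex < ey` but `exz = eyz`, where it asks `yz` to be ghost. In that situation
`eα(x) < eα(y)` stays strict, by injectivity of `α` on `eU \ {0}` (the case `ex = 0` is
trivial), so distributivity in `V` makes `α(yz)` ghost, and the trivial ghost kernel pulls this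
back to `yz`. -/

universe u v w

class STM (U : Type u) extends CommMonoid U, Zero U where
  zero_mul' : ∀ x : U, 0 * x = 0
  e : U
  e_idem : e * e = e
  ghost_zero : ∀ x : U, e * x = 0 → x = 0
  le : U → U → Prop
  le_refl : ∀ x : U, le x x
  le_trans : ∀ x y z : U, le x y → le y z → le x z
  le_total : ∀ x y : U, le x y ∨ le y x
  le_antisymm : ∀ x y : U, e * x = x → e * y = y → le x y → le y x → x = y
  le_e : ∀ x y : U, le x y ↔ le (e * x) (e * y)
  mul_le_mul : ∀ x y z : U, le x y → le (x * z) (y * z)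
  zero_le : ∀ x : U, le 0 x

namespace STM

variable {U : Type u} [STM U]

/-- `x` is a ghost element, i.e. `x ∈ eU`. -/
def Ghost (x : U) : Prop := e * x = x

/-- strict inequality for the ordering of the ghost ideal -/
def slt (x y : U) : Prop := le x y ∧ ¬ le y x

open scoped Classical in
/-- the forced addition on a supertropical monoid -/
noncomputable def add (x y : U) : U :=
  if slt (e * x) (e * y) then y
  else if slt (e * y) (e * x) then x
  else e * x

/-- the supertropical monoid `U` "is" a (supertropical) semiring: the forced
addition is associative and distributive. -/
def IsSemiring (U : Type u) [STM U] : Prop :=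
  (∀ x y z : U, add (add x y) z = add x (add y z)) ∧
  (∀ x y z : U, add x y * z = add (x * z) (y * z))

end STM

open STM

/-- A transmission between supertropical monoids. -/
structure IsTransmission {U : Type u} {V : Type v} [STM U] [STM V] (α : U → V) : Prop where
  map_zero : α 0 = 0
  map_one : α 1 = 1
  map_mul : ∀ x y : U, α (x * y) = α x * α y
  map_e : α (STM.e : U) = (STM.e : V)
  mono : ∀ x y : U, Ghost x → Ghost y → STM.le x y → STM.le (α x) (α y)

namespace STM

variable {W : Type w} [STM W]

theorem e_mul_e_mul (x : W) : (e : W) * (e * x) = e * x := by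
  rw [← mul_assoc, e_idem]

theorem ghost_e_mul (x : W) : Ghost ((e : W) * x) := e_mul_e_mul x

theorem e_mul_zero : (e : W) * 0 = 0 := by
  rw [mul_comm]; exact zero_mul' e

theorem le_congr {x x' y y' : W} (hx : (e : W) * x = e * x') (hy : (e : W) * y = e * y') :
    le x y ↔ le x' y' := by
  rw [le_e, hx, hy, ← le_e]

theorem slt_congr {x x' y y' : W} (hx : (e : W) * x = e * x') (hy : (e : W) * y = e * y') :
    slt x y ↔ slt x' y' := by
  unfold slt; rw [le_congr hx hy, le_congr hy hx]

theorem e_mul_eq_of_le_of_le {x y : W} (hxy : le x y) (hyx : le y x) : (e : W) * x = e * y :=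
  le_antisymm _ _ (ghost_e_mul x) (ghost_e_mul y) ((le_e x y).1 hxy) ((le_e y x).1 hyx)

theorem slt_irrefl (x : W) : ¬ slt x x := fun h => h.2 (le_refl x)

theorem slt_of_slt_of_le {x y z : W} (hxy : slt x y) (hyz : le y z) : slt x z :=
  ⟨le_trans _ _ _ hxy.1 hyz, fun hzx => hxy.2 (le_trans _ _ _ hyz hzx)⟩

theorem slt_trans {x y z : W} (hxy : slt x y) (hyz : slt y z) : slt x z :=
  slt_of_slt_of_le hxy hyz.1

theorem slt_asymm {x y : W} (h : slt x y) : ¬ slt y x := fun h' => slt_irrefl x (slt_trans h h')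

theorem slt_trichotomy (x y : W) : slt x y ∨ (e : W) * x = e * y ∨ slt y x := by
  by_cases hxy : le x y <;> by_cases hyx : le y x
  · exact Or.inr (Or.inl (e_mul_eq_of_le_of_le hxy hyx))
  · exact Or.inl ⟨hxy, hyx⟩
  · exact Or.inr (Or.inr ⟨hyx, hxy⟩)
  · exact absurd (le_total x y) (by tauto)

theorem add_of_slt {x y : W} (h : slt x y) : add x y = y := by
  rw [add, if_pos ((slt_congr (e_mul_e_mul x) (e_mul_e_mul y)).2 h)]

theorem add_of_slt' {x y : W} (h : slt y x) : add x y = x := by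
  rw [add, if_neg ((slt_congr (e_mul_e_mul x) (e_mul_e_mul y)).not.2 (slt_asymm h)),
    if_pos ((slt_congr (e_mul_e_mul y) (e_mul_e_mul x)).2 h)]

theorem add_of_e_mul_eq {x y : W} (h : (e : W) * x = e * y) : add x y = e * x := by
  rw [add, if_neg (h ▸ slt_irrefl _), if_neg (h ▸ slt_irrefl _)]

protected theorem add_comm (x y : W) : add x y = add y x := by
  rcases slt_trichotomy x y with h | h | h
  · rw [add_of_slt h, add_of_slt' h]
  · rw [add_of_e_mul_eq h, add_of_e_mul_eq h.symm, h]
  · rw [add_of_slt' h, add_of_slt h]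

theorem le_add_left (x y : W) : le x (add x y) := by
  rcases slt_trichotomy x y with h | h | h
  · rw [add_of_slt h]; exact h.1
  · rw [add_of_e_mul_eq h, le_congr rfl (e_mul_e_mul x)]; exact le_refl x
  · rw [add_of_slt' h]; exact le_refl x

theorem add_add_of_slt {x y : W} (h : slt x y) (z : W) : add x (add y z) = add y z :=
  add_of_slt (slt_of_slt_of_le h (le_add_left y z))

protected theorem add_assoc (x y z : W) : add (add x y) z = add x (add y z) := by
  rcases slt_trichotomy x y with hxy | hxy | hxy
  · rw [add_of_slt hxy, add_add_of_slt hxy]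
  · rw [add_of_e_mul_eq hxy]
    rcases slt_trichotomy y z with hyz | hyz | hyz
    · have hxz : slt x z := (slt_congr hxy.symm rfl).1 hyz
      rw [add_of_slt hyz, add_of_slt hxz, add_of_slt ((slt_congr (e_mul_e_mul x) rfl).2 hxz)]
    · rw [add_of_e_mul_eq hyz, add_of_e_mul_eq (hxy.trans (e_mul_e_mul y).symm),
        add_of_e_mul_eq ((e_mul_e_mul x).trans (hxy.trans hyz)), e_mul_e_mul]
    · rw [add_of_slt' hyz, add_of_e_mul_eq hxy,
        add_of_slt' ((slt_congr rfl (hxy.symm.trans (e_mul_e_mul x).symm)).1 hyz)]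
  · rw [add_of_slt' hxy]
    rcases slt_trichotomy y z with hyz | hyz | hyz
    · rw [add_of_slt hyz]
    · have hzx : slt z x := (slt_congr hyz rfl).1 hxy
      rw [add_of_e_mul_eq hyz, add_of_slt' hzx,
        add_of_slt' ((slt_congr (e_mul_e_mul y).symm rfl).1 hxy)]
    · rw [add_of_slt' hyz, add_of_slt' hxy, add_of_slt' (slt_trans hyz hxy)]

theorem add_mul_of_slt {x y : W} (hxy : slt x y) (z : W)
    (hcollapse : (e : W) * (x * z) = e * (y * z) → Ghost (y * z)) :
    add x y * z = add (x * z) (y * z) := by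
  rw [add_of_slt hxy]
  rcases slt_trichotomy (x * z) (y * z) with h | h | h
  · rw [add_of_slt h]
  · rw [add_of_e_mul_eq h, h, hcollapse h]
  · exact absurd (mul_le_mul x y z hxy.1) h.2

theorem isSemiring_iff :
    IsSemiring W ↔ ∀ x y z : W, slt x y → (e : W) * (x * z) = e * (y * z) → Ghost (y * z) := by
  refine ⟨fun hW x y z hxy hcollapse => ?_, fun hW => ⟨STM.add_assoc, fun x y z => ?_⟩⟩
  · have hdistrib := hW.2 x y z
    rw [add_of_slt hxy, add_of_e_mul_eq hcollapse] at hdistrib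
    rw [hdistrib]
    exact ghost_e_mul _
  · rcases slt_trichotomy x y with h | h | h
    · exact add_mul_of_slt h z (hW x y z h)
    · rw [add_of_e_mul_eq h, add_of_e_mul_eq (by rw [← mul_assoc, ← mul_assoc, h]), mul_assoc]
    · rw [STM.add_comm, add_mul_of_slt h z (hW y x z h), STM.add_comm]

end STM

namespace IsTransmission

variable {U : Type u} {V : Type v} [STM U] [STM V] {α : U → V}

theorem map_e_mul (hα : IsTransmission α) (x : U) : α (e * x) = e * α x := by
  rw [hα.map_mul, hα.map_e]

theorem le_map (hα : IsTransmission α) {x y : U} (h : le x y) : le (α x) (α y) := by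
  rw [le_e, ← hα.map_e_mul, ← hα.map_e_mul]
  exact hα.mono _ _ (ghost_e_mul x) (ghost_e_mul y) ((le_e x y).1 h)

theorem slt_map (hα : IsTransmission α)
    (hinj : ∀ x y : U, Ghost x → Ghost y → x ≠ 0 → y ≠ 0 → α x = α y → x = y)
    {x y : U} (hx : (e : U) * x ≠ 0) (hxy : slt x y) : slt (α x) (α y) := by
  refine ⟨hα.le_map hxy.1, fun hyx => hxy.2 ?_⟩
  have hy : (e : U) * y ≠ 0 := fun hy => hxy.2 ((le_e y x).2 (hy ▸ zero_le _))
  have hαe : α (e * x) = α (e * y) := by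
    rw [hα.map_e_mul, hα.map_e_mul, e_mul_eq_of_le_of_le (hα.le_map hxy.1) hyx]
  rw [le_congr (hinj _ _ (ghost_e_mul x) (ghost_e_mul y) hx hy hαe).symm rfl]
  exact le_refl x

end IsTransmission

/-- If a transmission `α : U → V` is injective on `(eU) \\ {0}`, has trivial ghost kernel,
and `V` is a semiring, then `U` is a semiring. -/
theorem semiring_of_transmission_trivial_ghost_kernel {U : Type u} {V : Type v}
    [STM U] [STM V] (α : U → V) (hα : IsTransmission α)
    (hinj : ∀ x y : U, Ghost x → Ghost y → x ≠ 0 → y ≠ 0 → α x = α y → x = y)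
    (hker : ∀ x : U, Ghost (α x) → Ghost x)
    (hV : IsSemiring V) :
    IsSemiring U := by
  rw [isSemiring_iff] at hV ⊢
  intro x y z hxy hcollapse
  by_cases hx : (e : U) * x = 0
  · have hyz : y * z = 0 := ghost_zero _ (by rw [← hcollapse, ← mul_assoc, hx, zero_mul'])
    rw [hyz]
    exact e_mul_zero
  · apply hker
    rw [hα.map_mul]
    refine hV _ _ _ (hα.slt_map hinj hx hxy) ?_
    simpa only [hα.map_e_mul, hα.map_mul] using congrArg α hcollapse
end

section
/- Let U be a supertropical monoid with M = eU, and N a submonoid of U containing all tangibles and 0. Then an unfolding of U along N exists and is unique up to unique isomorphism: i.e., there is a fiber contraction τ: Ũ → U over M with Ũ unfolded (the set of tangibles together with 0 in Ũ is closed under multiplication), whose fibers are τ⁻¹(x) = {x, x̃} for x ∈ M ∩ N, {x̃} for x ∈ N \ M, {x} for x ∈ M \ N, with x̃ a tangible (or zero) lift; and any two such unfoldings are related by a unique isomorphism over U. -/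
universe u v w

open STM

/-- tangible or zero -/
def TangibleOrZero {U : Type u} [STM U] (x : U) : Prop := ¬ Ghost x ∨ x = 0

/-- `U` is unfolded: the tangibles together with `0` are closed under multiplication. -/
def IsUnfolded (U : Type u) [STM U] : Prop :=
  ∀ x y : U, TangibleOrZero x → TangibleOrZero y → TangibleOrZero (x * y)

/-- `τ : W → U` is an unfolding of `U` along the submonoid `N`. -/
def IsUnfolding {U : Type u} [STM U] {W : Type u} [STM W] (τ : W → U) (N : Set U) : Prop :=
  IsTransmission τ ∧ Function.Surjective τ ∧ IsUnfolded W ∧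
  (∀ x ∈ N, ∃! w : W, TangibleOrZero w ∧ τ w = x) ∧
  (∀ x : U, Ghost x → ∃! w : W, Ghost w ∧ τ w = x) ∧
  (∀ (x : U) (w : W), τ w = x → (TangibleOrZero w ∧ x ∈ N) ∨ (Ghost w ∧ Ghost x))

/-!
An element `w` of an unfolding `τ : W → U` is determined by `τ w` together with whether `w` is
ghost: the ghost elements over a point form a singleton, and so do the tangible-or-zero elements
over a point of `N`. Hence between two unfoldings there is exactly one map over `U` preserving
ghostness; it is a transmission because in an unfolded monoid a product is ghost iff a factor is
ghost or the product is zero, and its inverse is the analogous map in the other direction. Any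
isomorphism over `U` preserves ghostness, so it is this map.

For existence, `Ũ = N ⊔ eU` glued along `0` is realised by flagging each element of `U` as a
tangible lift (allowed for nonzero elements of `N`) or as a ghost (allowed for elements of `eU`).
A product of tangible lifts is a tangible lift unless it vanishes.
-/

-- Only a local instance: globally it would give `*` on every `STM` a second elaboration path.
abbrev STM.toCommMonoidWithZero {U : Type u} [STM U] : CommMonoidWithZero U where
  zero_mul := zero_mul'
  mul_zero x := by rw [mul_comm]; exact zero_mul' x

section

attribute [local instance] STM.toCommMonoidWithZero

namespace STM

variable {U : Type u} [STM U]

theorem Ghost.zero : Ghost (0 : U) := mul_zero _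

theorem Ghost.e : Ghost (e : U) := e_idem

theorem Ghost.mul_right {x : U} (hx : Ghost x) (y : U) : Ghost (x * y) := by
  rw [Ghost, ← mul_assoc, hx]

theorem Ghost.mul_left {y : U} (hy : Ghost y) (x : U) : Ghost (x * y) := by
  rw [mul_comm]; exact hy.mul_right x

end STM

section Transmission

variable {U : Type u} {V : Type v} [STM U] [STM V] {α : U → V}

theorem IsTransmission.ghost (hα : IsTransmission α) {x : U} (hx : Ghost x) :
    Ghost (α x) := by
  rw [Ghost, ← hα.map_e, ← hα.map_mul, hx]

theorem IsTransmission.ghost_iff_of_injective (hα : IsTransmission α)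
    (hinj : Function.Injective α) {x : U} : Ghost (α x) ↔ Ghost x := by
  refine ⟨fun hx => hinj ?_, hα.ghost⟩
  rw [hα.map_mul, hα.map_e, hx]

end Transmission

theorem IsUnfolded.ghost_mul_iff {W : Type u} [STM W] (hW : IsUnfolded W) {x y : W} :
    Ghost (x * y) ↔ Ghost x ∨ Ghost y ∨ x * y = 0 := by
  constructor
  · intro hxy
    by_contra! hne
    exact (hW x y (Or.inl hne.1) (Or.inl hne.2.1)).elim (· hxy) hne.2.2
  · rintro (hx | hy | h0)
    · exact hx.mul_right y
    · exact hy.mul_left x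
    · exact h0 ▸ Ghost.zero

namespace IsUnfolding

variable {U W : Type u} [STM U] [STM W] {τ : W → U} {N : Set U}

theorem isTransmission (h : IsUnfolding τ N) : IsTransmission τ := h.1

theorem isUnfolded (h : IsUnfolding τ N) : IsUnfolded W := h.2.2.1

theorem existsUnique_tangibleOrZero (h : IsUnfolding τ N) {x : U} (hx : x ∈ N) :
    ∃! w : W, TangibleOrZero w ∧ τ w = x :=
  h.2.2.2.1 x hx

theorem existsUnique_ghost (h : IsUnfolding τ N) {x : U} (hx : Ghost x) :
    ∃! w : W, Ghost w ∧ τ w = x :=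
  h.2.2.2.2.1 x hx

theorem mem_of_not_ghost (h : IsUnfolding τ N) {w : W} (hw : ¬ Ghost w) : τ w ∈ N :=
  ((h.2.2.2.2.2 _ w rfl).resolve_right fun hg => hw hg.1).2

theorem eq_of_tau_eq_of_ghost_iff (h : IsUnfolding τ N) {w w' : W} (hτ : τ w = τ w')
    (hg : Ghost w ↔ Ghost w') : w = w' := by
  by_cases hw : Ghost w
  · exact (h.existsUnique_ghost (h.isTransmission.ghost hw)).unique ⟨hw, rfl⟩
      ⟨hg.1 hw, hτ.symm⟩
  · exact (h.existsUnique_tangibleOrZero (h.mem_of_not_ghost hw)).unique ⟨Or.inl hw, rfl⟩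
      ⟨Or.inl (hg.not.1 hw), hτ.symm⟩

theorem tau_eq_zero_iff (h : IsUnfolding τ N) {w : W} : τ w = 0 ↔ w = 0 := by
  refine ⟨fun hw => STM.ghost_zero w ?_, fun hw => hw ▸ h.isTransmission.map_zero⟩
  refine h.eq_of_tau_eq_of_ghost_iff ?_ (iff_of_true (Ghost.e.mul_right w) Ghost.zero)
  rw [h.isTransmission.map_mul, hw, mul_zero, h.isTransmission.map_zero]

theorem ghost_mul_iff (h : IsUnfolding τ N) {x y : W} :
    Ghost (x * y) ↔ Ghost x ∨ Ghost y ∨ τ x * τ y = 0 := by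
  rw [h.isUnfolded.ghost_mul_iff, ← h.isTransmission.map_mul, h.tau_eq_zero_iff]

theorem ghost_one_iff (h : IsUnfolding τ N) : Ghost (1 : W) ↔ ∀ x ∈ N, x = 0 := by
  constructor
  · intro h1 x hx
    obtain ⟨w, ⟨hw, rfl⟩, -⟩ := h.existsUnique_tangibleOrZero hx
    have hwg : Ghost w := by rw [Ghost, ← mul_one (e : W), h1, one_mul]
    rw [hw.resolve_left (not_not_intro hwg), h.isTransmission.map_zero]
  · intro hN
    by_contra h1
    have h10 : (1 : W) = 0 := h.tau_eq_zero_iff.1 (hN _ (h.mem_of_not_ghost h1))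
    exact h1 (h10 ▸ Ghost.zero)

theorem le_of_tau_le (h : IsUnfolding τ N) {w w' : W} (hw : Ghost w) (hw' : Ghost w')
    (hle : STM.le (τ w) (τ w')) : STM.le w w' := by
  rcases STM.le_total w w' with hle' | hle'
  · exact hle'
  · have hτ : τ w = τ w' := STM.le_antisymm _ _ (h.isTransmission.ghost hw)
      (h.isTransmission.ghost hw') hle (h.isTransmission.mono _ _ hw' hw hle')
    rw [h.eq_of_tau_eq_of_ghost_iff hτ (iff_of_true hw hw')]
    exact STM.le_refl _

end IsUnfolding

structure IsGhostPreservingOver {U : Type u} {W₁ : Type v} {W₂ : Type w} [STM U] [STM W₁]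
    [STM W₂] (τ₁ : W₁ → U) (τ₂ : W₂ → U) (ρ : W₁ → W₂) : Prop where
  comp_eq : ∀ w, τ₂ (ρ w) = τ₁ w
  ghost_iff : ∀ w, Ghost (ρ w) ↔ Ghost w

section GhostPreservingOver

variable {U W₁ W₂ : Type u} [STM U] [STM W₁] [STM W₂] {N : Set U}
  {τ₁ : W₁ → U} {τ₂ : W₂ → U}

theorem IsUnfolding.exists_isGhostPreservingOver (h₁ : IsUnfolding τ₁ N)
    (h₂ : IsUnfolding τ₂ N) : ∃ ρ : W₁ → W₂, IsGhostPreservingOver τ₁ τ₂ ρ := by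
  suffices ∀ w, ∃ w₂ : W₂, τ₂ w₂ = τ₁ w ∧ (Ghost w₂ ↔ Ghost w) by
    choose ρ hτ hg using this
    exact ⟨ρ, hτ, hg⟩
  intro w
  by_cases hw : Ghost w
  · obtain ⟨w₂, ⟨hg, hτ⟩, -⟩ := h₂.existsUnique_ghost (h₁.isTransmission.ghost hw)
    exact ⟨w₂, hτ, iff_of_true hg hw⟩
  · obtain ⟨w₂, ⟨ht, hτ⟩, -⟩ := h₂.existsUnique_tangibleOrZero (h₁.mem_of_not_ghost hw)
    refine ⟨w₂, hτ, iff_of_false (fun hg => hw ?_) hw⟩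
    have hw0 : w = 0 := h₁.tau_eq_zero_iff.1 <| by
      rw [← hτ, ht.resolve_left (not_not_intro hg), h₂.isTransmission.map_zero]
    exact hw0 ▸ Ghost.zero

namespace IsGhostPreservingOver

variable {ρ : W₁ → W₂}

theorem apply_eq (h₂ : IsUnfolding τ₂ N) (hρ : IsGhostPreservingOver τ₁ τ₂ ρ) {w : W₁}
    {w₂ : W₂} (hτ : τ₂ w₂ = τ₁ w) (hg : Ghost w₂ ↔ Ghost w) : ρ w = w₂ :=
  h₂.eq_of_tau_eq_of_ghost_iff (by rw [hρ.comp_eq, hτ]) (by rw [hρ.ghost_iff, hg])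

theorem eq (h₂ : IsUnfolding τ₂ N) {ρ' : W₁ → W₂} (hρ : IsGhostPreservingOver τ₁ τ₂ ρ)
    (hρ' : IsGhostPreservingOver τ₁ τ₂ ρ') : ρ = ρ' :=
  funext fun w => hρ.apply_eq h₂ (hρ'.comp_eq w) (hρ'.ghost_iff w)

theorem leftInverse (h₁ : IsUnfolding τ₁ N) (hρ : IsGhostPreservingOver τ₁ τ₂ ρ)
    {σ : W₂ → W₁} (hσ : IsGhostPreservingOver τ₂ τ₁ σ) : Function.LeftInverse σ ρ :=
  fun w => hσ.apply_eq h₁ (hρ.comp_eq w).symm (hρ.ghost_iff w).symm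

theorem isTransmission (h₁ : IsUnfolding τ₁ N) (h₂ : IsUnfolding τ₂ N)
    (hρ : IsGhostPreservingOver τ₁ τ₂ ρ) : IsTransmission ρ where
  map_zero := hρ.apply_eq h₂ (by rw [h₁.isTransmission.map_zero, h₂.isTransmission.map_zero])
    (iff_of_true Ghost.zero Ghost.zero)
  map_one := hρ.apply_eq h₂ (by rw [h₁.isTransmission.map_one, h₂.isTransmission.map_one])
    (h₂.ghost_one_iff.trans h₁.ghost_one_iff.symm)
  map_mul x y := hρ.apply_eq h₂
    (by rw [h₂.isTransmission.map_mul, h₁.isTransmission.map_mul, hρ.comp_eq, hρ.comp_eq])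
    (by rw [h₂.ghost_mul_iff, h₁.ghost_mul_iff, hρ.ghost_iff, hρ.ghost_iff, hρ.comp_eq,
      hρ.comp_eq])
  map_e := hρ.apply_eq h₂ (by rw [h₁.isTransmission.map_e, h₂.isTransmission.map_e])
    (iff_of_true Ghost.e Ghost.e)
  mono x y hx hy hle := h₂.le_of_tau_le ((hρ.ghost_iff x).2 hx) ((hρ.ghost_iff y).2 hy)
    (by rw [hρ.comp_eq, hρ.comp_eq]; exact h₁.isTransmission.mono x y hx hy hle)

end IsGhostPreservingOver

end GhostPreservingOver

namespace STM

variable {U : Type u} [STM U]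

@[ext]
structure Unfold (N : Submonoid U) where
  val : U
  tangible : Prop
  mem_of_tangible : tangible → val ∈ N
  ne_zero_of_tangible : tangible → val ≠ 0
  ghost_of_not_tangible : ¬ tangible → Ghost val

namespace Unfold

variable {N : Submonoid U}

@[simps]
def ofGhost (x : U) (hx : Ghost x) : Unfold N :=
  ⟨x, False, False.elim, False.elim, fun _ => hx⟩

/-- The lift `x̃` of `x ∈ N`, with `0̃ = 0`. -/
@[simps]
def lift (x : U) (hx : x ∈ N) : Unfold N :=
  ⟨x, x ≠ 0, fun _ => hx, id, fun h => not_not.1 h ▸ Ghost.zero⟩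

theorem ghost_val_mul_of_not (a b : Unfold N)
    (h : ¬ (a.tangible ∧ b.tangible ∧ a.val * b.val ≠ 0)) : Ghost (a.val * b.val) := by
  by_cases ha : a.tangible
  · by_cases hb : b.tangible
    · exact not_not.1 (fun h0 => h ⟨ha, hb, h0⟩) ▸ Ghost.zero
    · exact (b.ghost_of_not_tangible hb).mul_left _
  · exact (a.ghost_of_not_tangible ha).mul_right _

instance : Mul (Unfold N) where
  mul a b := ⟨a.val * b.val, a.tangible ∧ b.tangible ∧ a.val * b.val ≠ 0,
    fun h => N.mul_mem (a.mem_of_tangible h.1) (b.mem_of_tangible h.2.1), fun h => h.2.2,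
    a.ghost_val_mul_of_not b⟩

instance : One (Unfold N) := ⟨lift 1 N.one_mem⟩

instance : Zero (Unfold N) := ⟨ofGhost 0 Ghost.zero⟩

@[simp] theorem val_mul (a b : Unfold N) : (a * b).val = a.val * b.val := rfl

@[simp] theorem tangible_mul (a b : Unfold N) :
    (a * b).tangible ↔ a.tangible ∧ b.tangible ∧ a.val * b.val ≠ 0 := Iff.rfl

@[simp] theorem val_one : (1 : Unfold N).val = 1 := rfl

@[simp] theorem tangible_one : (1 : Unfold N).tangible ↔ (1 : U) ≠ 0 := Iff.rfl

@[simp] theorem val_zero : (0 : Unfold N).val = 0 := rfl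

@[simp] theorem tangible_zero : ¬ (0 : Unfold N).tangible := id

theorem eq_zero_iff {a : Unfold N} : a = 0 ↔ a.val = 0 :=
  ⟨fun h => h ▸ rfl, fun h => Unfold.ext h (by simpa using fun ht => a.ne_zero_of_tangible ht h)⟩

protected theorem mul_comm (a b : Unfold N) : a * b = b * a := by
  ext
  · exact mul_comm _ _
  · simp only [tangible_mul, mul_comm a.val]
    tauto

protected theorem mul_assoc (a b c : Unfold N) : a * b * c = a * (b * c) := by
  ext
  · exact mul_assoc _ _ _
  · simp only [tangible_mul, val_mul, ← mul_assoc]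
    have hab := @left_ne_zero_of_mul _ _ (a.val * b.val) c.val
    have hbc (h : a.val * b.val * c.val ≠ 0) : b.val * c.val ≠ 0 :=
      right_ne_zero_of_mul (by rwa [mul_assoc] at h)
    tauto

protected theorem one_mul (a : Unfold N) : 1 * a = a := by
  ext
  · exact one_mul _
  · simp only [tangible_mul, tangible_one, val_one, one_mul]
    have := a.ne_zero_of_tangible
    have h1 (h : a.val ≠ 0) : (1 : U) ≠ 0 := left_ne_zero_of_mul (by rwa [one_mul])
    tauto

instance : CommMonoid (Unfold N) where
  mul_assoc := Unfold.mul_assoc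
  one_mul := Unfold.one_mul
  mul_one a := by rw [Unfold.mul_comm, Unfold.one_mul]
  mul_comm := Unfold.mul_comm

theorem ofGhost_e_mul_eq_self_iff {a : Unfold N} :
    ofGhost e Ghost.e * a = a ↔ ¬ a.tangible := by
  constructor
  · intro h ht
    have := congrArg tangible h
    simp only [tangible_mul, ofGhost_tangible, false_and] at this
    exact this ▸ ht
  · intro h
    ext
    · exact a.ghost_of_not_tangible h
    · simp [h]

instance : STM (Unfold N) where
  zero_mul' a := by ext <;> simp
  e := ofGhost e Ghost.e
  e_idem := by ext <;> simp [e_idem]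
  ghost_zero a h := eq_zero_iff.2 <| STM.ghost_zero _ (congrArg val h)
  le a b := STM.le a.val b.val
  le_refl _ := STM.le_refl _
  le_trans _ _ _ := STM.le_trans _ _ _
  le_total _ _ := STM.le_total _ _
  le_antisymm a b ha hb hab hba := by
    ext
    · exact STM.le_antisymm _ _ (congrArg val ha) (congrArg val hb) hab hba
    · exact iff_of_false (ofGhost_e_mul_eq_self_iff.1 ha) (ofGhost_e_mul_eq_self_iff.1 hb)
  le_e _ _ := STM.le_e _ _
  mul_le_mul _ _ _ := STM.mul_le_mul _ _ _
  zero_le _ := STM.zero_le _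

theorem ghost_iff {a : Unfold N} : Ghost a ↔ ¬ a.tangible := ofGhost_e_mul_eq_self_iff

theorem tangibleOrZero_iff {a : Unfold N} : TangibleOrZero a ↔ a.tangible ∨ a.val = 0 := by
  rw [TangibleOrZero, ghost_iff, not_not, eq_zero_iff]

theorem isUnfolding_val (htang : ∀ x : U, ¬ Ghost x → x ∈ N) :
    IsUnfolding (val : Unfold N → U) N := by
  refine ⟨⟨rfl, rfl, fun _ _ => rfl, rfl, fun _ _ _ _ => id⟩, ?_, ?_, ?_, ?_, ?_⟩
  · intro x
    by_cases hx : Ghost x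
    · exact ⟨ofGhost x hx, rfl⟩
    · exact ⟨lift x (htang x hx), rfl⟩
  · intro a b ha hb
    rw [tangibleOrZero_iff] at ha hb ⊢
    by_cases h0 : a.val * b.val = 0
    · exact Or.inr h0
    · refine Or.inl ⟨ha.resolve_right fun h => h0 ?_, hb.resolve_right fun h => h0 ?_, h0⟩
      · rw [h, zero_mul]
      · rw [h, mul_zero]
  · intro x hx
    refine ⟨lift x hx, ⟨tangibleOrZero_iff.2 (em' _), rfl⟩, ?_⟩
    rintro a ⟨ha, rfl⟩
    refine Unfold.ext rfl (propext ⟨a.ne_zero_of_tangible, fun h => ?_⟩)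
    exact (tangibleOrZero_iff.1 ha).resolve_right h
  · intro x hx
    refine ⟨ofGhost x hx, ⟨ghost_iff.2 id, rfl⟩, ?_⟩
    rintro a ⟨ha, rfl⟩
    exact Unfold.ext rfl (propext (iff_of_false (ghost_iff.1 ha) id))
  · rintro x a rfl
    by_cases ha : a.tangible
    · exact Or.inl ⟨tangibleOrZero_iff.2 (Or.inl ha), a.mem_of_tangible ha⟩
    · exact Or.inr ⟨ghost_iff.2 ha, a.ghost_of_not_tangible ha⟩

end Unfold

end STM

end

theorem unfolding_exists_unique_general {U : Type u} [STM U] (N : Set U)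
    (h1 : (1 : U) ∈ N)
    (hmul : ∀ x ∈ N, ∀ y ∈ N, x * y ∈ N)
    (htang : ∀ x : U, ¬ Ghost x → x ∈ N) :
    (∃ (W : Type u) (sW : STM W) (τ : W → U), @IsUnfolding U _ W sW τ N) ∧
    (∀ (W1 W2 : Type u) [STM W1] [STM W2] (τ1 : W1 → U) (τ2 : W2 → U),
      IsUnfolding τ1 N → IsUnfolding τ2 N →
      ∃! ρ : W1 → W2, IsTransmission ρ ∧ Function.Bijective ρ ∧
        ∀ w : W1, τ2 (ρ w) = τ1 w) := by
  let S : Submonoid U := ⟨⟨N, fun ha hb => hmul _ ha _ hb⟩, h1⟩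
  refine ⟨⟨STM.Unfold S, inferInstance, STM.Unfold.val, STM.Unfold.isUnfolding_val htang⟩, ?_⟩
  intro W₁ W₂ _ _ τ₁ τ₂ h₁ h₂
  obtain ⟨ρ, hρ⟩ := h₁.exists_isGhostPreservingOver h₂
  obtain ⟨σ, hσ⟩ := h₂.exists_isGhostPreservingOver h₁
  refine ⟨ρ, ⟨hρ.isTransmission h₁ h₂, ?_, hρ.comp_eq⟩, ?_⟩
  · exact ⟨(hρ.leftInverse h₁ hσ).injective, (hσ.leftInverse h₂ hρ).surjective⟩
  · rintro ρ' ⟨hρ't, hρ'b, hρ'τ⟩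
    exact hρ.eq h₂ ⟨hρ'τ, fun _ => hρ't.ghost_iff_of_injective hρ'b.1⟩ |>.symm

/-- Existence and uniqueness (up to unique isomorphism over `U`) of the unfolding of a
supertropical monoid `U` along a submonoid `N` containing all tangibles and `0`. -/
theorem unfolding_exists_unique {U : Type u} [STM U] (N : Set U)
    (h1 : (1 : U) ∈ N) (h0 : (0 : U) ∈ N)
    (hmul : ∀ x ∈ N, ∀ y ∈ N, x * y ∈ N)
    (htang : ∀ x : U, ¬ Ghost x → x ∈ N) :
    (∃ (W : Type u) (sW : STM W) (τ : W → U), @IsUnfolding U _ W sW τ N) ∧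
    (∀ (W1 W2 : Type u) [STM W1] [STM W2] (τ1 : W1 → U) (τ2 : W2 → U),
      IsUnfolding τ1 N → IsUnfolding τ2 N →
      ∃! ρ : W1 → W2, IsTransmission ρ ∧ Function.Bijective ρ ∧
        ∀ w : W1, τ2 (ρ w) = τ1 w) :=
  unfolding_exists_unique_general N h1 hmul htang
end
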